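/- arXiv:2103.10803 — 6 statements merged into one kernel-verified Lean document; each statement's English description precedes it below -/
import Mathlib

section
/- For the Binary Erasure Channel, the Bhattacharyya parameter of the synthetic channel corresponding to the monomial x₁x₂ in 4 variables is pointwise at most that of x₀x₃: for all p ∈ [0,1], (1 - (1 - p²)⁴)² ≤ 1 - (1 - (1 - (1-p)²)⁴)². -/
/-!
Write `f p = (1 - (1 - p²)⁴)²` for the parameter of `x₁x₂`. The parallel map `1 - (1 - p)²` is
the series map conjugated by `p ↦ 1 - p`, so the parameter of `x₀x₃` is `1 - f (1 - p)` and the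
claim is `f p + f (1 - p) ≤ 1`. The left side is symmetric under
`p ↔ 1 - p`, hence a polynomial in `s = p (1 - p)`, and in fact
`1 - f p - f (1 - p) = s⁴ (16 + 48 s³ - 2 s⁴)`, which is nonnegative for `0 ≤ s ≤ 1`.
-/

def bhattacharyyaX1X2 (p : ℝ) : ℝ := (1 - (1 - p ^ 2) ^ 4) ^ 2

lemma one_sub_bhattacharyyaX1X2_sub_bhattacharyyaX1X2_one_sub (p : ℝ) :
    1 - bhattacharyyaX1X2 p - bhattacharyyaX1X2 (1 - p)
      = (p * (1 - p)) ^ 4 * (16 + 48 * (p * (1 - p)) ^ 3 - 2 * (p * (1 - p)) ^ 4) := by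
  unfold bhattacharyyaX1X2
  ring

lemma bhattacharyyaX1X2_add_bhattacharyyaX1X2_one_sub_le_one {p : ℝ} (hp₀ : 0 ≤ p) (hp₁ : p ≤ 1) :
    bhattacharyyaX1X2 p + bhattacharyyaX1X2 (1 - p) ≤ 1 := by
  set s := p * (1 - p)
  have hs₀ : 0 ≤ s := mul_nonneg hp₀ (sub_nonneg.mpr hp₁)
  have hs₁ : s ≤ 1 := mul_le_one₀ hp₁ (sub_nonneg.mpr hp₁) (by linarith)
  have hgap : 0 ≤ s ^ 4 * (16 + 48 * s ^ 3 - 2 * s ^ 4) := by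
    have : s ^ 4 ≤ 1 := pow_le_one₀ hs₀ hs₁
    have : 0 ≤ s ^ 3 := pow_nonneg hs₀ 3
    exact mul_nonneg (pow_nonneg hs₀ 4) (by linarith)
  linarith [one_sub_bhattacharyyaX1X2_sub_bhattacharyyaX1X2_one_sub p]

/-- For the BEC, the Bhattacharyya parameter of the synthetic channel of monomial
`x₁x₂` (vector `(0,1,1,0)`) is pointwise at most that of `x₀x₃` (vector `(1,0,0,1)`). -/
theorem bec_x1x2_le_x0x3 :
    ∀ p ∈ Set.Icc (0:ℝ) 1,
      (1 - (1 - p^2)^4)^2 ≤ 1 - (1 - (1 - (1 - p)^2)^4)^2 := by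
  rintro p ⟨hp₀, hp₁⟩
  have h := bhattacharyyaX1X2_add_bhattacharyyaX1X2_one_sub_le_one hp₀ hp₁
  unfold bhattacharyyaX1X2 at h
  linarith
end

section
/- For positive integers l, w, n with n = wl, and for any i with l ≤ i ≤ n, the coefficient of the Bernstein expansion of 1-(1-p^l)^w satisfies: 1-(1-p^l)^w = ∑_{i=l}^{n} (∑_{j=1}^{⌊i/l⌋} (-1)^{j+1} C(w,j) C(n-jl, n-i)) p^i (1-p)^{n-i}. -/
open Finset

/-!
Expanding `(1 - p ^ l) ^ w` by the binomial theorem gives the inclusion–exclusion sum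
`∑ⱼ (-1) ^ (j + 1) C(w, j) p ^ (j l)` over the sets of `j` fully working chains. Each monomial
`p ^ a` with `a ≤ n` has the Bernstein expansion `∑_{i ≥ a} C(n - a, n - i) p ^ i (1 - p) ^ (n - i)`
(multiply by `(p + (1 - p)) ^ (n - a)`), and exchanging the two sums yields the coefficients.
-/

theorem one_sub_one_sub_pow {R : Type*} [CommRing R] (x : R) (w : ℕ) :
    1 - (1 - x) ^ w = ∑ j ∈ Icc 1 w, (-1) ^ (j + 1) * (w.choose j : R) * x ^ j := by
  have hbinom : (1 - x) ^ w = ∑ j ∈ range (w + 1), (-1) ^ j * (w.choose j : R) * x ^ j := by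
    rw [sub_eq_neg_add, add_pow]
    refine sum_congr rfl fun j _ => ?_
    rw [neg_pow]
    ring
  rw [hbinom, Nat.range_succ_eq_Icc_zero, ← insert_Icc_add_one_left_eq_Icc (Nat.zero_le w),
    sum_insert (by simp), ← sub_sub]
  simp [pow_succ, sub_eq_add_neg, ← sum_neg_distrib]

theorem pow_eq_sum_Icc_choose_mul_pow_mul_one_sub_pow {R : Type*} [CommRing R] (x : R)
    {a n : ℕ} (h : a ≤ n) :
    x ^ a = ∑ i ∈ Icc a n, ((n - a).choose (n - i) : R) * x ^ i * (1 - x) ^ (n - i) := by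
  obtain ⟨m, rfl⟩ := Nat.exists_eq_add_of_le h
  calc x ^ a = x ^ a * (x + (1 - x)) ^ m := by simp
    _ = ∑ k ∈ range (m + 1), x ^ a * (x ^ k * (1 - x) ^ (m - k) * m.choose k) := by
      rw [add_pow, mul_sum]
    _ = _ := by
      rw [← Ico_add_one_right_eq_Icc, sum_Ico_eq_sum_range, show a + m + 1 - a = m + 1 by omega]
      refine sum_congr rfl fun k hk => ?_
      have hk : k ≤ m := Nat.lt_succ_iff.mp (mem_range.mp hk)
      rw [show a + m - (a + k) = m - k by omega, Nat.add_sub_cancel_left, Nat.choose_symm hk,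
        pow_add]
      ring

theorem sum_Icc_sum_Icc_mul_comm {M : Type*} [AddCommMonoid M] {l : ℕ} (hl : 0 < l) (w : ℕ)
    (f : ℕ → ℕ → M) :
    ∑ j ∈ Icc 1 w, ∑ i ∈ Icc (j * l) (w * l), f j i
      = ∑ i ∈ Icc l (w * l), ∑ j ∈ Icc 1 (i / l), f j i := by
  refine sum_comm' fun j i => ?_
  simp only [mem_Icc, Nat.le_div_iff_mul_le hl]
  constructor
  · rintro ⟨⟨hj, -⟩, hji, hiw⟩
    exact ⟨⟨hj, hji⟩, (Nat.le_mul_of_pos_left l hj).trans hji, hiw⟩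
  · rintro ⟨⟨hj, hji⟩, -, hiw⟩
    exact ⟨⟨hj, Nat.le_of_mul_le_mul_right (hji.trans hiw) hl⟩, hji, hiw⟩

theorem bernstein_expansion_parallel_chains_general (w l : ℕ) (hl : 0 < l)
    (p : ℝ) :
    1 - (1 - p ^ l) ^ w
      = ∑ i ∈ Icc l (w * l),
          (∑ j ∈ Icc 1 (i / l),
            (-1 : ℝ) ^ (j + 1) * (w.choose j : ℝ) * ((w * l - j * l).choose (w * l - i) : ℝ))
          * p ^ i * (1 - p) ^ (w * l - i) := by
  rw [one_sub_one_sub_pow]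
  calc ∑ j ∈ Icc 1 w, (-1) ^ (j + 1) * (w.choose j : ℝ) * (p ^ l) ^ j
      = ∑ j ∈ Icc 1 w, ∑ i ∈ Icc (j * l) (w * l), (-1) ^ (j + 1) * (w.choose j : ℝ) *
          (((w * l - j * l).choose (w * l - i) : ℝ) * p ^ i * (1 - p) ^ (w * l - i)) := by
        refine sum_congr rfl fun j hj => ?_
        have hjl : j * l ≤ w * l := Nat.mul_le_mul_right l (mem_Icc.mp hj).2
        rw [← pow_mul', pow_eq_sum_Icc_choose_mul_pow_mul_one_sub_pow p hjl, mul_sum]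
    _ = _ := by
        rw [sum_Icc_sum_Icc_mul_comm hl]
        refine sum_congr rfl fun i _ => ?_
        rw [sum_mul, sum_mul]
        exact sum_congr rfl fun j _ => by ring

/-- Bernstein expansion of the reliability polynomial of `w` parallel chains of `l`
devices each (`n = wl`): inclusion-exclusion formula for the path counts. -/
theorem bernstein_expansion_parallel_chains (w l : ℕ) (hw : 0 < w) (hl : 0 < l)
    (p : ℝ) :
    1 - (1 - p ^ l) ^ w
      = ∑ i ∈ Icc l (w * l),
          (∑ j ∈ Icc 1 (i / l),
            (-1 : ℝ) ^ (j + 1) * (w.choose j : ℝ) * ((w * l - j * l).choose (w * l - i) : ℝ))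
          * p ^ i * (1 - p) ^ (w * l - i) :=
  bernstein_expansion_parallel_chains_general w l hl p
end

section
/- With a(m) = C(2^i + 2^{i-m}, 2^i) interpreted as the generalized binomial coefficient ∏_{j=1}^{2^i} (j + 2^{i-m})/j, the average reliability Avr(W^{(1^i 0^{m-i})}) = 1 - 1/a(m) tends to 0 as m → ∞ whenever i = i(m) ≤ m - log₂(m) - log₂(log₂(m)). -/
/-!
By the Weierstrass product inequality `1 - ∏ aⱼ ≤ ∑ (1 - aⱼ)`, and `1 - jl/(jl+1) ≤ 1/(jl)`,
`1 - ∏_{j=1}^{w} jl/(jl+1) ≤ H_w / l ≤ (1 + log w) / l`. The hypothesis on `i` makes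
`l = 2^{m-i} ≥ m log₂ m` and `1 + log w = 1 + i log 2 ≤ m`, so the defect is at most `1 / log₂ m`.
-/

open Finset Filter Real

theorem Finset.one_sub_prod_le_sum_one_sub {ι R : Type*} [CommRing R] [LinearOrder R]
    [IsStrictOrderedRing R] (s : Finset ι) (a : ι → R) (h0 : ∀ j ∈ s, 0 ≤ a j)
    (h1 : ∀ j ∈ s, a j ≤ 1) : 1 - ∏ j ∈ s, a j ≤ ∑ j ∈ s, (1 - a j) := by
  classical
  induction s using Finset.induction_on with
  | empty => simp
  | @insert k s hk ih =>
    simp only [forall_mem_insert] at h0 h1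
    rw [sum_insert hk, prod_insert hk]
    have hprod : ∏ j ∈ s, a j ≤ 1 := prod_le_one h0.2 h1.2
    have hsum := ih h0.2 h1.2
    -- `1 - aₖ P = (1 - aₖ) + aₖ (1 - P)` and `aₖ (1 - P) ≤ 1 - P`
    nlinarith [mul_le_of_le_one_left (sub_nonneg.mpr hprod) h1.1]

theorem one_sub_prod_mul_div_mul_add_one_le (w : ℕ) {l : ℝ} (hl : 0 < l) :
    1 - ∏ j ∈ Icc 1 w, ((j : ℝ) * l) / ((j : ℝ) * l + 1) ≤ (1 + Real.log w) / l := by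
  calc 1 - ∏ j ∈ Icc 1 w, ((j : ℝ) * l) / ((j : ℝ) * l + 1)
      ≤ ∑ j ∈ Icc 1 w, (1 - ((j : ℝ) * l) / ((j : ℝ) * l + 1)) :=
        one_sub_prod_le_sum_one_sub _ _ (fun j _ => by positivity)
          (fun j _ => div_le_one_of_le₀ (by linarith) (by positivity))
    _ ≤ ∑ j ∈ Icc 1 w, (j : ℝ)⁻¹ / l := by
        refine sum_le_sum fun j hj => ?_
        have hj : (0 : ℝ) < j := by exact_mod_cast (mem_Icc.mp hj).1
        rw [one_sub_div (by positivity), add_sub_cancel_left, inv_div_left, one_div]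
        gcongr
        linarith
    _ = harmonic w / l := by
        rw [← sum_div, harmonic_eq_sum_Icc]
        push_cast
        rfl
    _ ≤ (1 + Real.log w) / l := by
        gcongr
        exact harmonic_le_one_add_log w

section

variable {m i : ℕ}

theorem one_le_logb_two_natCast (hm : 2 ≤ m) : 1 ≤ logb 2 m := by
  rw [le_logb_iff_rpow_le one_lt_two (by positivity), rpow_one]
  exact_mod_cast hm

theorem le_sub_one_of_le_sub_logb (hm : 2 ≤ m)
    (h : (i : ℝ) ≤ m - logb 2 m - logb 2 (logb 2 m)) : (i : ℝ) ≤ m - 1 := by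
  have hlog := one_le_logb_two_natCast hm
  linarith [logb_nonneg one_lt_two hlog]

theorem mul_logb_le_two_pow_sub (hm : 2 ≤ m)
    (h : (i : ℝ) ≤ m - logb 2 m - logb 2 (logb 2 m)) : (m : ℝ) * logb 2 m ≤ 2 ^ (m - i) := by
  have hlog : 0 < logb 2 m := zero_lt_one.trans_le (one_le_logb_two_natCast hm)
  have him : i ≤ m := by
    have := le_sub_one_of_le_sub_logb hm h
    exact_mod_cast (show (i : ℝ) ≤ m by linarith)
  calc (m : ℝ) * logb 2 m
      = (2 : ℝ) ^ (logb 2 m + logb 2 (logb 2 m)) := by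
        rw [rpow_add two_pos, rpow_logb two_pos (by norm_num) (by positivity),
          rpow_logb two_pos (by norm_num) hlog]
    _ ≤ (2 : ℝ) ^ ((m - i : ℕ) : ℝ) := by
        gcongr
        · norm_num
        · push_cast [him]
          linarith
    _ = 2 ^ (m - i) := rpow_natCast 2 (m - i)

theorem one_sub_prod_le_inv_logb (hm : 2 ≤ m)
    (h : (i : ℝ) ≤ m - logb 2 m - logb 2 (logb 2 m)) :
    1 - ∏ j ∈ Icc 1 ((2 : ℕ) ^ i), ((j : ℝ) * 2 ^ (m - i)) / ((j : ℝ) * 2 ^ (m - i) + 1) ≤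
      (logb 2 m)⁻¹ := by
  have hlog : 0 < logb 2 m := zero_lt_one.trans_le (one_le_logb_two_natCast hm)
  have hm0 : (0 : ℝ) < m := by positivity
  have hnum : 1 + Real.log ((2 ^ i : ℕ) : ℝ) ≤ m := by
    rw [Nat.cast_pow, Real.log_pow, Nat.cast_ofNat]
    nlinarith [le_sub_one_of_le_sub_logb hm h, Real.log_two_lt_d9, Real.log_pos one_lt_two,
      (Nat.cast_nonneg i : (0 : ℝ) ≤ i)]
  calc _ ≤ (1 + Real.log ((2 ^ i : ℕ) : ℝ)) / 2 ^ (m - i) :=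
        one_sub_prod_mul_div_mul_add_one_le _ (by positivity)
    _ ≤ m / (m * logb 2 m) := by
        gcongr
        exact mul_logb_le_two_pow_sub hm h
    _ = (logb 2 m)⁻¹ := by field_simp

end

theorem avr_tendsto_zero_general (i : ℕ → ℕ)
    (h : ∀ m, (i m : ℝ) ≤ (m : ℝ) - Real.logb 2 m - Real.logb 2 (Real.logb 2 m)) :
    Tendsto
      (fun m => 1 - ∏ j ∈ Icc 1 ((2 : ℕ) ^ i m),
        ((j : ℝ) * 2 ^ (m - i m)) / ((j : ℝ) * 2 ^ (m - i m) + 1))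
      atTop (nhds 0) := by
  have hlog : Tendsto (fun m : ℕ => (logb 2 m)⁻¹) atTop (nhds 0) :=
    tendsto_inv_atTop_zero.comp
      ((tendsto_logb_atTop one_lt_two).comp tendsto_natCast_atTop_atTop)
  refine tendsto_of_tendsto_of_tendsto_of_le_of_le' tendsto_const_nhds hlog
    (Eventually.of_forall fun m => ?_) ?_
  · refine sub_nonneg.mpr (prod_le_one (fun j _ => by positivity) fun j _ => ?_)
    exact div_le_one_of_le₀ (by linarith) (by positivity)
  · filter_upwards [eventually_ge_atTop 2] with m hm
    exact one_sub_prod_le_inv_logb hm (h m)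

/-- If `i(m) ≤ m - log₂ m - log₂ log₂ m`, then the average reliability
`Avr(W^{(1^i 0^{m-i})}) = 1 - ∏_{j=1}^{2^i} jl/(jl+1)` (with `l = 2^{m-i}`)
tends to `0` as `m → ∞`. -/
theorem avr_tendsto_zero (i : ℕ → ℕ) (hle : ∀ m, i m ≤ m)
    (h : ∀ m, (i m : ℝ) ≤ (m : ℝ) - Real.logb 2 m - Real.logb 2 (Real.logb 2 m)) :
    Tendsto
      (fun m => 1 - ∏ j ∈ Icc 1 ((2 : ℕ) ^ i m),
        ((j : ℝ) * 2 ^ (m - i m)) / ((j : ℝ) * 2 ^ (m - i m) + 1))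
      atTop (nhds 0) :=
  avr_tendsto_zero_general i h
end

section
/- With w(n) = n/log₂(n) and l(n) = log₂(n), the product ∏_{j=1}^{⌊w(n)⌋} (jl(n)+1)/(jl(n)) tends to 2 as n → ∞. -/
/-!
Let `P(w, l) = ∏_{j=1}^{w} (1 + 1/(jl))`. Since `x - x² ≤ log (1 + x) ≤ x` for `x ≥ 0`,
`log P(w, l)` lies between `(H_w / l)(1 - 1/l)` and `H_w / l`, so `P(w, l) → e^c` whenever
`l → ∞` and `H_w / l → c`. With `w = ⌊x / log_b x⌋` and `l = log_b x` we have
`H_w = log (x / l) + O(1)` and `log (x / l) / l = log b - log l / l → log b`, so the limit is `b`.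
-/

open Finset Filter

open Real Topology

/-- The generalized binomial coefficient `C(w + 1/l, w)`. -/
noncomputable def genBinom (w : ℕ) (l : ℝ) : ℝ :=
  ∏ j ∈ Icc 1 w, ((j : ℝ) * l + 1) / ((j : ℝ) * l)

lemma sub_sq_le_log_one_add {x : ℝ} (hx : 0 ≤ x) : x - x ^ 2 ≤ log (1 + x) := by
  have h := one_sub_inv_le_log_of_pos (by positivity : 0 < 1 + x)
  have : x - x ^ 2 ≤ 1 - (1 + x)⁻¹ := by
    -- the difference is `x ^ 3 / (1 + x)`
    rw [← sub_nonneg]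
    field_simp
    ring_nf
    positivity
  linarith

lemma sum_Icc_inv_mul_eq_harmonic_div (w : ℕ) (l : ℝ) :
    ∑ j ∈ Icc 1 w, ((j : ℝ) * l)⁻¹ = harmonic w / l := by
  simp only [harmonic_eq_sum_Icc, Rat.cast_sum, Rat.cast_inv, Rat.cast_natCast, mul_inv, sum_mul,
    div_eq_mul_inv]

lemma natCast_mul_pos_of_mem_Icc {w j : ℕ} {l : ℝ} (hj : j ∈ Icc 1 w) (hl : 0 < l) :
    (0 : ℝ) < j * l :=
  mul_pos (by exact_mod_cast (mem_Icc.mp hj).1) hl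

lemma genBinom_factor_pos {w j : ℕ} {l : ℝ} (hj : j ∈ Icc 1 w) (hl : 0 < l) :
    0 < ((j : ℝ) * l + 1) / ((j : ℝ) * l) :=
  have := natCast_mul_pos_of_mem_Icc hj hl
  div_pos (by linarith) this

lemma log_genBinom (w : ℕ) {l : ℝ} (hl : 0 < l) :
    log (genBinom w l) = ∑ j ∈ Icc 1 w, log (1 + ((j : ℝ) * l)⁻¹) := by
  rw [genBinom, log_prod fun j hj => (genBinom_factor_pos hj hl).ne']
  refine sum_congr rfl fun j hj => ?_
  rw [add_div, div_self (natCast_mul_pos_of_mem_Icc hj hl).ne', one_div]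

lemma genBinom_pos (w : ℕ) {l : ℝ} (hl : 0 < l) : 0 < genBinom w l :=
  prod_pos fun _ hj => genBinom_factor_pos hj hl

lemma log_genBinom_le_harmonic_div (w : ℕ) {l : ℝ} (hl : 0 < l) :
    log (genBinom w l) ≤ harmonic w / l := by
  rw [log_genBinom w hl, ← sum_Icc_inv_mul_eq_harmonic_div]
  gcongr with j hj
  have := natCast_mul_pos_of_mem_Icc hj hl
  linarith [log_le_sub_one_of_pos (by positivity : 0 < 1 + ((j : ℝ) * l)⁻¹)]

lemma harmonic_div_mul_le_log_genBinom (w : ℕ) {l : ℝ} (hl : 0 < l) :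
    harmonic w / l * (1 - l⁻¹) ≤ log (genBinom w l) := by
  calc harmonic w / l * (1 - l⁻¹)
      = ∑ j ∈ Icc 1 w, (((j : ℝ) * l)⁻¹ - ((j : ℝ) * l)⁻¹ * l⁻¹) := by
        rw [sum_sub_distrib, ← sum_mul, sum_Icc_inv_mul_eq_harmonic_div]; ring
    _ ≤ ∑ j ∈ Icc 1 w, (((j : ℝ) * l)⁻¹ - ((j : ℝ) * l)⁻¹ ^ 2) := by
        gcongr with j hj
        rw [sq]
        gcongr
        exact le_mul_of_one_le_left hl.le (by exact_mod_cast (mem_Icc.mp hj).1)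
    _ ≤ log (genBinom w l) := by
        rw [log_genBinom w hl]
        gcongr with j hj
        exact sub_sq_le_log_one_add (inv_pos.mpr (natCast_mul_pos_of_mem_Icc hj hl)).le

section Asymptotics

variable {α : Type*} {f : Filter α} {l : α → ℝ} {c : ℝ}

theorem tendsto_genBinom {w : α → ℕ} (hl : Tendsto l f atTop)
    (hw : Tendsto (fun a => (harmonic (w a) : ℝ) / l a) f (𝓝 c)) :
    Tendsto (fun a => genBinom (w a) (l a)) f (𝓝 (exp c)) := by
  have hlower : Tendsto (fun a => (harmonic (w a) : ℝ) / l a * (1 - (l a)⁻¹)) f (𝓝 c) := by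
    simpa using hw.mul ((tendsto_const_nhds (x := (1 : ℝ))).sub hl.inv_tendsto_atTop)
  have hlog : Tendsto (fun a => log (genBinom (w a) (l a))) f (𝓝 c) := by
    refine tendsto_of_tendsto_of_tendsto_of_le_of_le' hlower hw ?_ ?_ <;>
      filter_upwards [hl.eventually_gt_atTop 0] with a ha
    · exact harmonic_div_mul_le_log_genBinom _ ha
    · exact log_genBinom_le_harmonic_div _ ha
  refine (continuous_exp.tendsto c |>.comp hlog).congr' ?_
  filter_upwards [hl.eventually_gt_atTop 0] with a ha
  exact exp_log (genBinom_pos _ ha)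

theorem tendsto_harmonic_floor_div {y : α → ℝ} (hl : Tendsto l f atTop)
    (hy : ∀ᶠ a in f, 1 ≤ y a) (h : Tendsto (fun a => log (y a) / l a) f (𝓝 c)) :
    Tendsto (fun a => (harmonic ⌊y a⌋₊ : ℝ) / l a) f (𝓝 c) := by
  have hupper : Tendsto (fun a => (1 + log (y a)) / l a) f (𝓝 c) := by
    simpa [add_div] using hl.inv_tendsto_atTop.add h
  refine tendsto_of_tendsto_of_tendsto_of_le_of_le' h hupper ?_ ?_ <;>
    filter_upwards [hl.eventually_gt_atTop 0, hy] with a ha hya <;> gcongr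
  · exact log_le_harmonic_floor _ (by linarith)
  · exact harmonic_floor_le_one_add_log _ hya

end Asymptotics

theorem tendsto_log_div_logb_div_logb {b : ℝ} (hb : 1 < b) :
    Tendsto (fun x => log (x / logb b x) / logb b x) atTop (𝓝 (log b)) := by
  have hlogb := tendsto_logb_atTop hb
  have hsmall : Tendsto (fun x => log (logb b x) / logb b x) atTop (𝓝 0) :=
    isLittleO_log_id_atTop.tendsto_div_nhds_zero.comp hlogb
  refine (by simpa using hsmall.const_sub (log b) :
    Tendsto (fun x => log b - log (logb b x) / logb b x) atTop (𝓝 (log b))).congr' ?_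
  filter_upwards [hlogb.eventually_gt_atTop 0, eventually_gt_atTop 1] with x hl hx
  rw [log_div (by positivity) hl.ne', sub_div, ← log_div_log (x := x),
    div_div_cancel₀ (log_pos hx).ne']

theorem tendsto_genBinom_floor_div_logb {b : ℝ} (hb : 1 < b) :
    Tendsto (fun x => genBinom ⌊x / logb b x⌋₊ (logb b x)) atTop (𝓝 b) := by
  have hlogb := tendsto_logb_atTop hb
  have hlog := tendsto_log_div_logb_div_logb hb
  have hy : ∀ᶠ x in atTop, 1 ≤ x / logb b x := by
    filter_upwards [hlog.eventually_const_lt (log_pos hb), hlogb.eventually_gt_atTop 0,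
      eventually_gt_atTop 0] with x hpos hl hx
    have := (log_pos_iff (by positivity)).mp ((div_pos_iff_of_pos_right hl).mp hpos)
    linarith
  simpa [exp_log (by linarith : 0 < b)] using
    tendsto_genBinom hlogb (tendsto_harmonic_floor_div hlogb hy hlog)

/-- With `w(n) = n/log₂ n` and `l(n) = log₂ n`, the generalized binomial coefficient
`∏_{j=1}^{⌊w(n)⌋} (jl(n)+1)/(jl(n))` tends to `2` as `n → ∞`. -/
theorem gen_binom_tendsto_two :
    Tendsto
      (fun n : ℕ =>
        ∏ j ∈ Icc 1 ⌊(n : ℝ) / Real.logb 2 n⌋₊,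
          ((j : ℝ) * Real.logb 2 n + 1) / ((j : ℝ) * Real.logb 2 n))
      atTop (nhds 2) :=
  (tendsto_genBinom_floor_div_logb one_lt_two).comp tendsto_natCast_atTop_atTop
end

section
/- Let f and g be squarefree monomials of the same degree s with index sequences i₁<⋯<i_s and j₁<⋯<j_s, and let h be an index not occurring in either f or g. Then f ⪯_d g if and only if x_h·f ⪯_d x_h·g, where ⪯_d is the dominance order on the sorted index sequences. -/
/-!
Write `T_k(A)` for the sum of the `k` largest elements of `A`; then `f ⪯_d g` says
`T_k f ≤ T_k g` for every `k`. Since `T_k(A)` is the largest sum of at most `k` elements of `A`,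
for `h ∉ A` we get `T_{k+1}(A ∪ {h}) = max (T_{k+1} A) (h + T_k A)`, and the forward implication
follows at once. Conversely, if `T_{k+1}(g ∪ {h}) = h + T_k g`, cancel `h`; otherwise `h` is below
the `(k+1)`-st largest element of `g`, so by concavity of `k ↦ T_k g` also
`T_k(g ∪ {h}) = T_k g`, whence `T_k f ≤ T_k(f ∪ {h}) ≤ T_k(g ∪ {h}) = T_k g`.
-/

open Finset

/-- Dominance order on monomials identified with finite index sets: all suffix sums of
the increasingly sorted index list of `f` are dominated by those of `g`. -/
def DomF (s : ℕ) (f g : Finset ℕ) : Prop :=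
  ∀ ℓ < s, ((f.sort (· ≤ ·)).drop (s - (ℓ + 1))).sum
      ≤ ((g.sort (· ≤ ·)).drop (s - (ℓ + 1))).sum

theorem List.Sublist.sum_le_sum_drop {α : Type*} [AddCommMonoid α] [PartialOrder α]
    [IsOrderedAddMonoid α] {M L : List α} (hML : M.Sublist L) (hL : L.Pairwise (· ≤ ·)) :
    M.sum ≤ (L.drop (L.length - M.length)).sum := by
  induction hML with
  | slnil => simp
  | @cons M L a hML ih =>
    rw [List.length_cons, Nat.sub_add_comm hML.length_le, List.drop_succ_cons]
    exact ih hL.of_cons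
  | @cons_cons M L a hML ih =>
    rw [List.length_cons, List.length_cons, Nat.add_sub_add_right]
    obtain hlen | hlen := hML.length_le.eq_or_lt
    · rw [hML.eq_of_length hlen, Nat.sub_self, List.drop_zero]
    · obtain ⟨d, hd⟩ : ∃ d, L.length - M.length = d + 1 :=
        ⟨L.length - M.length - 1, by omega⟩
      have hdL : d < L.length := by omega
      rw [hd, List.drop_succ_cons, List.drop_eq_getElem_cons hdL, List.sum_cons, List.sum_cons,
        ← hd]
      exact add_le_add (List.rel_of_pairwise_cons hL (L.getElem_mem hdL)) (ih hL.of_cons)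

/-- `topSum A k` is the sum of the `k` largest elements of `A` (of all of `A` once `k ≥ #A`). -/
def topSum (A : Finset ℕ) (k : ℕ) : ℕ := ((A.sort (· ≤ ·)).drop (A.card - k)).sum

theorem sum_eq_sum_sort (A : Finset ℕ) : ∑ x ∈ A, x = (A.sort (· ≤ ·)).sum := by
  conv_lhs => rw [← sort_toFinset A (· ≤ ·)]
  simpa using List.sum_toFinset id (sort_nodup A (· ≤ ·))

theorem topSum_zero (A : Finset ℕ) : topSum A 0 = 0 := by
  rw [topSum, Nat.sub_zero, ← length_sort (· ≤ ·), List.drop_length, List.sum_nil]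

theorem sum_le_topSum {A B : Finset ℕ} {k : ℕ} (hBA : B ⊆ A) (hBk : B.card ≤ k) :
    ∑ x ∈ B, x ≤ topSum A k := by
  have hsub : (B.sort (· ≤ ·)).Sublist (A.sort (· ≤ ·)) :=
    List.sublist_of_subperm_of_pairwise
      (List.subperm_of_subset (sort_nodup _ _) fun x hx => by simpa using hBA (by simpa using hx))
      (pairwise_sort _ _) (pairwise_sort _ _)
  calc ∑ x ∈ B, x ≤ ((A.sort (· ≤ ·)).drop (A.card - B.card)).sum := by
        simpa [sum_eq_sum_sort] using hsub.sum_le_sum_drop (pairwise_sort _ _)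
    _ ≤ topSum A k :=
        (List.drop_sublist_drop_left _ (by omega)).sum_le_sum fun _ _ => Nat.zero_le _

theorem exists_subset_sum_eq_topSum (A : Finset ℕ) (k : ℕ) :
    ∃ C ⊆ A, C.card ≤ k ∧ ∑ x ∈ C, x = topSum A k := by
  have hnodup : ((A.sort (· ≤ ·)).drop (A.card - k)).Nodup :=
    (sort_nodup _ _).sublist (List.drop_sublist _ _)
  refine ⟨((A.sort (· ≤ ·)).drop (A.card - k)).toFinset, fun x hx => ?_, ?_, ?_⟩
  · simpa using List.drop_subset _ _ (List.mem_toFinset.mp hx)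
  · rw [List.toFinset_card_of_nodup hnodup, List.length_drop, length_sort]
    omega
  · simpa [topSum] using List.sum_toFinset id hnodup

theorem topSum_insert_succ {A : Finset ℕ} {h : ℕ} (hh : h ∉ A) (k : ℕ) :
    topSum (insert h A) (k + 1) = max (topSum A (k + 1)) (h + topSum A k) := by
  refine le_antisymm ?_ (max_le ?_ ?_)
  · obtain ⟨C, hCA, hCk, hC⟩ := exists_subset_sum_eq_topSum (insert h A) (k + 1)
    rw [← hC]
    by_cases hhC : h ∈ C
    · rw [← add_sum_erase C (fun x => x) hhC]
      refine le_max_of_le_right (Nat.add_le_add_left (sum_le_topSum ?_ ?_) h)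
      · simpa [subset_insert_iff] using hCA
      · rw [card_erase_of_mem hhC]; omega
    · exact le_max_of_le_left (sum_le_topSum ((subset_insert_iff_of_notMem hhC).mp hCA) hCk)
  · obtain ⟨C, hCA, hCk, hC⟩ := exists_subset_sum_eq_topSum A (k + 1)
    exact hC ▸ sum_le_topSum (hCA.trans (subset_insert h A)) hCk
  · obtain ⟨C, hCA, hCk, hC⟩ := exists_subset_sum_eq_topSum A k
    have hhC : h ∉ C := fun h' => hh (hCA h')
    rw [← hC, show h + ∑ x ∈ C, x = ∑ x ∈ insert h C, x from
      (sum_insert (f := fun x => x) hhC).symm]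
    exact sum_le_topSum (insert_subset_insert h hCA) (by rw [card_insert_of_notMem hhC]; omega)

theorem topSum_succ_succ_add_le (A : Finset ℕ) (k : ℕ) :
    topSum A (k + 2) + topSum A k ≤ 2 * topSum A (k + 1) := by
  obtain ⟨B, hBA, hBk, hB⟩ := exists_subset_sum_eq_topSum A (k + 2)
  obtain ⟨C, hCA, hCk, hC⟩ := exists_subset_sum_eq_topSum A k
  rw [← hB, ← hC, two_mul]
  by_cases hCB : C.card < B.card
  · -- moving some `x ∈ B \ C` from `B` to `C` leaves two sets of at most `k + 1` elements
    obtain ⟨x, hxB, hxC⟩ := exists_mem_notMem_of_card_lt_card hCB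
    rw [← add_sum_erase B (fun x => x) hxB, add_comm x, add_assoc,
      show x + ∑ x ∈ C, x = ∑ x ∈ insert x C, x from
        (sum_insert (f := fun x => x) hxC).symm]
    refine add_le_add (sum_le_topSum ((erase_subset x B).trans hBA) ?_)
      (sum_le_topSum (insert_subset (hBA hxB) hCA) ?_)
    · rw [card_erase_of_mem hxB]; omega
    · rw [card_insert_of_notMem hxC]; omega
  · exact add_le_add (sum_le_topSum hBA (by omega)) (sum_le_topSum hCA (by omega))

theorem domF_iff_forall_topSum_le {s : ℕ} {f g : Finset ℕ} (hf : f.card = s) (hg : g.card = s) :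
    DomF s f g ↔ ∀ k, topSum f k ≤ topSum g k := by
  subst hf
  simp only [DomF, topSum, hg]
  refine ⟨fun H k => ?_, fun H ℓ _ => H (ℓ + 1)⟩
  rcases Nat.eq_zero_or_pos (min k f.card) with h0 | hpos
  · rw [show f.card - k = f.card - 0 by omega]
    exact (topSum_zero f).trans_le (Nat.zero_le _)
  · simpa [show f.card - (min k f.card - 1 + 1) = f.card - k by omega]
      using H (min k f.card - 1) (by omega)

theorem topSum_insert_le_of_topSum_le {f g : Finset ℕ} {h : ℕ} (hhf : h ∉ f) (hhg : h ∉ g)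
    (H : ∀ k, topSum f k ≤ topSum g k) : ∀ k, topSum (insert h f) k ≤ topSum (insert h g) k
  | 0 => by rw [topSum_zero, topSum_zero]
  | k + 1 => by
    rw [topSum_insert_succ hhf, topSum_insert_succ hhg]
    exact max_le_max (H _) (Nat.add_le_add_left (H k) h)

theorem topSum_le_of_topSum_insert_le {f g : Finset ℕ} {h : ℕ} (hhf : h ∉ f) (hhg : h ∉ g)
    (H : ∀ k, topSum (insert h f) k ≤ topSum (insert h g) k) : ∀ k, topSum f k ≤ topSum g k
  | 0 => by rw [topSum_zero, topSum_zero]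
  | k + 1 => by
    have H₁ := H (k + 1)
    have H₂ := H (k + 2)
    rw [topSum_insert_succ hhf, topSum_insert_succ hhg] at H₁ H₂
    simp only [Nat.add_assoc, Nat.reduceAdd] at H₂
    have := topSum_succ_succ_add_le g k
    -- if `h + T_{k+1} g < T_{k+2} g`, concavity gives `h + T_k g < T_{k+1} g` and `H₁` applies;
    -- otherwise `H₂` does
    omega

/-- For equal-degree squarefree monomials `f, g` and a variable `x_h` dividing neither,
`f ⪯_d g ↔ x_h f ⪯_d x_h g`. -/
theorem dominance_mul_var (s : ℕ) (f g : Finset ℕ) (h : ℕ)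
    (hf : f.card = s) (hg : g.card = s) (hhf : h ∉ f) (hhg : h ∉ g) :
    DomF s f g ↔ DomF (s + 1) (insert h f) (insert h g) := by
  rw [domF_iff_forall_topSum_le hf hg,
    domF_iff_forall_topSum_le (by rw [card_insert_of_notMem hhf, hf])
      (by rw [card_insert_of_notMem hhg, hg])]
  exact ⟨topSum_insert_le_of_topSum_le hhf hhg, topSum_le_of_topSum_insert_le hhf hhg⟩
end

section
/- For m = 4, the Bernstein coefficients (path counts) of the two degree-16 reliability polynomials satisfy N_i(C^{(0,1,1,0)}) ≤ N_i(C^{(1,0,0,1)}) for all 0 ≤ i ≤ 16, where 1-(1-(1-(1-p)²)⁴)² = ∑_i N_i(C^{(1,0,0,1)}) p^i(1-p)^{16-i} and (1-(1-p²)⁴)² = ∑_i N_i(C^{(0,1,1,0)}) p^i(1-p)^{16-i}; consequently (1-(1-p²)⁴)² ≤ 1-(1-(1-(1-p)²)⁴)² for all p ∈ [0,1]. -/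
open Finset

/-- Bernstein (path-count) coefficients of `C^{(0,1,1,0)}`. -/
def N0110 : Fin 17 → ℝ :=
  ![0, 0, 0, 0, 16, 192, 1008, 3040, 5828, 7456, 6552, 4048, 1788, 560, 120, 16, 1]

/-- Bernstein (path-count) coefficients of `C^{(1,0,0,1)}`. -/
def N1001 : Fin 17 → ℝ :=
  ![0, 0, 0, 0, 32, 320, 1456, 3984, 7042, 8400, 7000, 4176, 1804, 560, 120, 16, 1]

theorem sum_mul_pow_mul_one_sub_pow_le {n : ℕ} {a b : Fin (n + 1) → ℝ} (hab : ∀ i, a i ≤ b i)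
    {p : ℝ} (hp : p ∈ Set.Icc (0 : ℝ) 1) :
    ∑ i, a i * p ^ (i : ℕ) * (1 - p) ^ (n - i) ≤ ∑ i, b i * p ^ (i : ℕ) * (1 - p) ^ (n - i) := by
  have hp₀ : 0 ≤ p := hp.1
  have hp₁ : 0 ≤ 1 - p := sub_nonneg.mpr hp.2
  gcongr with i
  exact hab i

theorem reliability0110_eq_sum_N0110 (p : ℝ) :
    (1 - (1 - p ^ 2) ^ 4) ^ 2 = ∑ i : Fin 17, N0110 i * p ^ (i : ℕ) * (1 - p) ^ (16 - (i : ℕ)) := by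
  simp [Fin.sum_univ_succ, N0110]
  ring

theorem reliability1001_eq_sum_N1001 (p : ℝ) :
    1 - (1 - (1 - (1 - p) ^ 2) ^ 4) ^ 2
      = ∑ i : Fin 17, N1001 i * p ^ (i : ℕ) * (1 - p) ^ (16 - (i : ℕ)) := by
  simp [Fin.sum_univ_succ, N1001]
  ring

theorem N0110_le_N1001 (i : Fin 17) : N0110 i ≤ N1001 i := by
  fin_cases i <;> norm_num [N0110, N1001]

/-- The two degree-16 reliability polynomials have the stated Bernstein expansions,
their coefficients are dominated termwise, and hence the polynomials are dominated
pointwise on `[0,1]`. -/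
theorem bernstein_coefficients_dominate :
    (∀ p : ℝ, (1 - (1 - p ^ 2) ^ 4) ^ 2
        = ∑ i : Fin 17, N0110 i * p ^ (i : ℕ) * (1 - p) ^ (16 - (i : ℕ))) ∧
    (∀ p : ℝ, 1 - (1 - (1 - (1 - p) ^ 2) ^ 4) ^ 2
        = ∑ i : Fin 17, N1001 i * p ^ (i : ℕ) * (1 - p) ^ (16 - (i : ℕ))) ∧
    (∀ i : Fin 17, N0110 i ≤ N1001 i) ∧
    (∀ p ∈ Set.Icc (0:ℝ) 1,
      (1 - (1 - p ^ 2) ^ 4) ^ 2 ≤ 1 - (1 - (1 - (1 - p) ^ 2) ^ 4) ^ 2) := by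
  refine ⟨reliability0110_eq_sum_N0110, reliability1001_eq_sum_N1001, N0110_le_N1001,
    fun p hp => ?_⟩
  rw [reliability0110_eq_sum_N0110, reliability1001_eq_sum_N1001]
  exact sum_mul_pow_mul_one_sub_pow_le N0110_le_N1001 hp
end
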